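/- arXiv:2109.07565 — 6 statements merged into one kernel-verified Lean document; each statement's English description precedes it below -/
import Mathlib

section
/- Let P be a polyhedron in E with defining data (ι, n, b), let K ⊆ P be a nonempty convex set, and let y be a point of the intrinsic (relative) interior of K. Then for every index i such that ⟪y, n i⟫ = b i, the whole set K is contained in the hyperplane ∂H i; that is, ⟪x, n i⟫ = b i for all x ∈ K. -/
open RealInnerProductSpace

theorem relint_on_hyperplane_imp_subset
    {E : Type*} [NormedAddCommGroup E] [InnerProductSpace ℝ E]
    {ι : Type*} [Fintype ι] (n : ι → E) (b : ι → ℝ)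
    (P : Set E) (hP : P = {x : E | ∀ i, ⟪x, n i⟫ ≤ b i})
    (K : Set E) (hKconv : Convex ℝ K) (hKne : K.Nonempty) (hKP : K ⊆ P)
    (y : E) (hy : y ∈ intrinsicInterior ℝ K)
    (i : ι) (hyi : ⟪y, n i⟫ = b i) :
    ∀ x ∈ K, ⟪x, n i⟫ = b i := by
  intro x hx
  have hxle : ⟪x, n i⟫ ≤ b i := by
    have := hKP hx; rw [hP] at this; exact this i
  -- obtain interior point description
  rw [mem_intrinsicInterior] at hy
  obtain ⟨z, hz, hzy⟩ := hy
  have hxspan : x ∈ affineSpan ℝ K := subset_affineSpan ℝ K hx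
  have hyspan : y ∈ affineSpan ℝ K := hzy ▸ z.2
  -- the curve t ↦ x + t • (y - x) in the affine span
  have hmem : ∀ t : ℝ, x + t • (y - x) ∈ affineSpan ℝ K := by
    intro t
    have := AffineMap.lineMap_mem (k := ℝ) t hxspan hyspan
    simpa [AffineMap.lineMap_apply, vsub_eq_sub, vadd_eq_add, add_comm] using this
  set c : ℝ → affineSpan ℝ K := fun t => ⟨x + t • (y - x), hmem t⟩ with hc
  have hcont : Continuous c := by
    apply Continuous.subtype_mk
    exact continuous_const.add (continuous_id.smul continuous_const)
  have hc1 : c 1 = z := by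
    apply Subtype.ext
    simp [hc, hzy]
  -- c⁻¹' (interior (coe ⁻¹' K)) is an open set containing 1
  have hopen : IsOpen (c ⁻¹' interior (((↑) : affineSpan ℝ K → E) ⁻¹' K)) :=
    isOpen_interior.preimage hcont
  have h1mem : (1 : ℝ) ∈ c ⁻¹' interior (((↑) : affineSpan ℝ K → E) ⁻¹' K) := by
    simp [Set.mem_preimage, hc1, hz]
  obtain ⟨l, u, hlu, hsub⟩ := mem_nhds_iff_exists_Ioo_subset.mp (hopen.mem_nhds h1mem)
  obtain ⟨hl1, h1u⟩ := hlu
  set t : ℝ := (1 + u) / 2 with ht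
  have ht1 : 1 < t := by simp [ht]; linarith
  have htu : t < u := by simp [ht]; linarith
  have htmem : t ∈ Set.Ioo l u := ⟨lt_trans hl1 ht1, htu⟩
  have hpK : x + t • (y - x) ∈ K := by
    have h := hsub htmem
    have h2 : c t ∈ ((↑) : affineSpan ℝ K → E) ⁻¹' K := interior_subset h
    exact h2
  have hple : ⟪x + t • (y - x), n i⟫ ≤ b i := by
    have := hKP hpK; rw [hP] at this; exact this i
  have hinner : ⟪x + t • (y - x), n i⟫ = ⟪x, n i⟫ + t * (b i - ⟪x, n i⟫) := by
    rw [inner_add_left, real_inner_smul_left, inner_sub_left, hyi]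
  rw [hinner] at hple
  nlinarith
end

section
/- Let P be a polyhedron in E with defining data (ι, n, b), let K ⊆ P be a nonempty convex set, and define P_K = {x ∈ E | ∀ i, K ⊆ ∂H i → ⟪x, n i⟫ ≤ b i} (the intersection of those half-spaces of P whose boundary hyperplane contains K; P_K = E if there are none). Then for every point x in the intrinsic (relative) interior of K there exists ε > 0 such that P_K ∩ B_ε(x) = P ∩ B_ε(x), where B_ε(x) denotes the open metric ball of radius ε around x. -/
open RealInnerProductSpace

theorem pcone_locally_agrees_with_polyhedron
    {E : Type*} [NormedAddCommGroup E] [InnerProductSpace ℝ E]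
    {ι : Type*} [Fintype ι] (n : ι → E) (b : ι → ℝ)
    (P : Set E) (hP : P = {x : E | ∀ i, ⟪x, n i⟫ ≤ b i})
    (K : Set E) (hKconv : Convex ℝ K) (hKne : K.Nonempty) (hKP : K ⊆ P)
    (PK : Set E)
    (hPK : PK = {x : E | ∀ i, K ⊆ {w : E | ⟪w, n i⟫ = b i} → ⟪x, n i⟫ ≤ b i})
    (x : E) (hx : x ∈ intrinsicInterior ℝ K) :
    ∃ ε > 0, PK ∩ Metric.ball x ε = P ∩ Metric.ball x ε := by
  classical
  have hxK : x ∈ K := intrinsicInterior_subset hx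
  have hKle : ∀ w ∈ K, ∀ i, ⟪w, n i⟫ ≤ b i := by
    intro w hw i
    have := hKP hw
    rw [hP] at this
    exact this i
  -- strict inequality at x for non-tight constraints
  have hstrict : ∀ i, ¬ (K ⊆ {w : E | ⟪w, n i⟫ = b i}) → ⟪x, n i⟫ < b i := by
    intro i hi
    by_contra hle
    have hxb : ⟪x, n i⟫ = b i := le_antisymm (hKle x hxK i) (not_lt.mp hle)
    obtain ⟨z, hzK, hz⟩ := Set.not_subset.mp hi
    have hzlt : ⟪z, n i⟫ < b i := lt_of_le_of_ne (hKle z hzK i) hz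
    rw [mem_intrinsicInterior] at hx
    obtain ⟨y, hy, hyx⟩ := hx
    obtain ⟨δ, hδ, hball⟩ := Metric.isOpen_iff.mp isOpen_interior y hy
    set t : ℝ := δ / (2 * (‖x - z‖ + 1)) with ht
    have hpos : 0 < ‖x - z‖ + 1 := by positivity
    have htpos : 0 < t := by positivity
    set p : E := x + t • (x - z) with hp
    have hpspan : p ∈ affineSpan ℝ K := by
      have hxs : x ∈ affineSpan ℝ K := subset_affineSpan ℝ K hxK
      have hzs : z ∈ affineSpan ℝ K := subset_affineSpan ℝ K hzK
      have := AffineSubspace.smul_vsub_vadd_mem (affineSpan ℝ K) t hxs hzs hxs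
      simpa [hp, vsub_eq_sub, vadd_eq_add, add_comm] using this
    have hdist : dist p x < δ := by
      have : dist p x = t * ‖x - z‖ := by
        rw [dist_eq_norm]
        simp [hp, norm_smul, abs_of_pos htpos]
      rw [this]
      have h1 : t * ‖x - z‖ ≤ t * (‖x - z‖ + 1) :=
        mul_le_mul_of_nonneg_left (by linarith) htpos.le
      have h2 : t * (‖x - z‖ + 1) = δ / 2 := by
        rw [ht, div_mul_eq_mul_div, mul_div_mul_right _ _ hpos.ne']
      linarith
    have hq : (⟨p, hpspan⟩ : affineSpan ℝ K) ∈ Metric.ball y δ := by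
      rw [Metric.mem_ball, Subtype.dist_eq, hyx]
      exact hdist
    have hpK0 : (⟨p, hpspan⟩ : affineSpan ℝ K) ∈ (Subtype.val ⁻¹' K : Set (affineSpan ℝ K)) :=
      interior_subset (hball hq)
    have hpK : p ∈ K := hpK0
    have hple := hKle p hpK i
    have hcalc : ⟪p, n i⟫ = b i + t * (b i - ⟪z, n i⟫) := by
      rw [hp, inner_add_left, real_inner_smul_left, inner_sub_left, hxb]
    rw [hcalc] at hple
    nlinarith
  -- the open set where all non-tight constraints are strict
  set V : ι → Set E := fun i =>
    if K ⊆ {w : E | ⟪w, n i⟫ = b i} then Set.univ else {y : E | ⟪y, n i⟫ < b i} with hV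
  have hVopen : IsOpen (⋂ i, V i) := by
    apply isOpen_iInter_of_finite
    intro i
    simp only [hV]
    by_cases h : K ⊆ {w : E | ⟪w, n i⟫ = b i}
    · simp only [if_pos h]; exact isOpen_univ
    · simp only [if_neg h]
      exact isOpen_lt ((continuous_id).inner continuous_const) continuous_const
  have hxV : x ∈ ⋂ i, V i := by
    rw [Set.mem_iInter]
    intro i
    simp only [hV]
    by_cases h : K ⊆ {w : E | ⟪w, n i⟫ = b i}
    · simp only [if_pos h]; trivial
    · simp only [if_neg h]; exact hstrict i h
  obtain ⟨ε, hε, hballV⟩ := Metric.isOpen_iff.mp hVopen x hxV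
  refine ⟨ε, hε, ?_⟩
  apply Set.Subset.antisymm
  · rintro y ⟨hyPK, hyb⟩
    refine ⟨?_, hyb⟩
    rw [hP]
    intro i
    by_cases h : K ⊆ {w : E | ⟪w, n i⟫ = b i}
    · rw [hPK] at hyPK
      exact hyPK i h
    · have := hballV hyb
      rw [Set.mem_iInter] at this
      have := this i
      rw [hV] at this
      simp only [if_neg h] at this
      exact this.le
  · rintro y ⟨hyP, hyb⟩
    refine ⟨?_, hyb⟩
    rw [hPK]
    intro i _
    rw [hP] at hyP
    exact hyP i
end

section
/- (Necessary Criterion 1.) Let P be a polyhedron in E with defining data (ι, n, b), let f : E → ℝ be convex (ConvexOn ℝ Set.univ f), and assume argmin_P f is nonempty. Let A be the min space of f on P, i.e., A = ⋂{∂H i | argmin_P f ⊆ ∂H i} (equal to E if no hyperplane ∂H i contains argmin_P f). Then argmin_P f ⊆ argmin_A f; that is, every x ∈ argmin_P f satisfies f x ≤ f a for all a ∈ A. -/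
open RealInnerProductSpace

theorem necessary_criterion_one
    {E : Type*} [NormedAddCommGroup E] [InnerProductSpace ℝ E] [FiniteDimensional ℝ E]
    {ι : Type*} [Fintype ι] (n : ι → E) (b : ι → ℝ)
    (f : E → ℝ) (hf : ConvexOn ℝ Set.univ f)
    (P : Set E) (hP : P = {x : E | ∀ i, ⟪x, n i⟫ ≤ b i})
    (M : Set E) (hM : M = {x ∈ P | ∀ y ∈ P, f x ≤ f y}) (hMne : M.Nonempty)
    (A : Set E)
    (hA : A = ⋂ i ∈ {j : ι | M ⊆ {x : E | ⟪x, n j⟫ = b j}}, {x : E | ⟪x, n i⟫ = b i}) :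
    M ⊆ {x ∈ A | ∀ a ∈ A, f x ≤ f a} := by
  classical
  have hPconv : Convex ℝ P := by
    rw [hP]
    intro u hu v hv s t hs ht hst i
    have h1 : ⟪u, n i⟫ ≤ b i := hu i
    have h2 : ⟪v, n i⟫ ≤ b i := hv i
    have : ⟪s • u + t • v, n i⟫ = s * ⟪u, n i⟫ + t * ⟪v, n i⟫ := by
      rw [inner_add_left, real_inner_smul_left, real_inner_smul_left]
    show inner ℝ (s • u + t • v) (n i) ≤ b i
    rw [this]
    have h4 : s * b i + t * b i = b i := by rw [← add_mul, hst, one_mul]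
    nlinarith [mul_le_mul_of_nonneg_left h1 hs, mul_le_mul_of_nonneg_left h2 ht]
  have hMP : M ⊆ P := by rw [hM]; exact fun x hx => hx.1
  have hMconv : Convex ℝ M := by
    rw [hM]
    intro u hu v hv s t hs ht hst
    refine ⟨hPconv hu.1 hv.1 hs ht hst, fun y hy => ?_⟩
    have h1 := hf.2 (Set.mem_univ u) (Set.mem_univ v) hs ht hst
    have h2 := hu.2 y hy
    have h3 := hv.2 y hy
    simp only [smul_eq_mul] at h1
    have h4 : s * f y + t * f y = f y := by rw [← add_mul, hst, one_mul]
    linarith [mul_le_mul_of_nonneg_left h2 hs, mul_le_mul_of_nonneg_left h3 ht]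
  have key : ∀ T : Finset ι, (∀ i ∈ T, ∃ m ∈ M, ⟪m, n i⟫ < b i) →
      ∃ x' ∈ M, ∀ i ∈ T, ⟪x', n i⟫ < b i := by
    intro T
    induction T using Finset.induction_on with
    | empty =>
      intro _
      obtain ⟨x0, hx0⟩ := hMne
      exact ⟨x0, hx0, fun i hi => absurd hi (by simp)⟩
    | @insert i T hni ih =>
      intro h
      obtain ⟨x', hx'M, hx'⟩ := ih (fun j hj => h j (Finset.mem_insert_of_mem hj))
      obtain ⟨m, hmM, hm⟩ := h _ (Finset.mem_insert_self _ _)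
      refine ⟨(1/2 : ℝ) • x' + (1/2 : ℝ) • m,
        hMconv hx'M hmM (by norm_num) (by norm_num) (by norm_num), ?_⟩
      intro j hj
      have hsum : ⟪(1/2 : ℝ) • x' + (1/2 : ℝ) • m, n j⟫
          = (1/2) * ⟪x', n j⟫ + (1/2) * ⟪m, n j⟫ := by
        rw [inner_add_left, real_inner_smul_left, real_inner_smul_left]
      have hx'P : ⟪x', n j⟫ ≤ b j := by
        have := hMP hx'M; rw [hP] at this; exact this j
      have hmP : ⟪m, n j⟫ ≤ b j := by
        have := hMP hmM; rw [hP] at this; exact this j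
      rcases Finset.mem_insert.mp hj with rfl | hjT
      · rw [hsum]; linarith
      · have := hx' j hjT
        rw [hsum]; linarith
  intro x hxM
  have hxA : x ∈ A := by
    rw [hA]
    refine Set.mem_iInter₂.mpr fun i hi => hi hxM
  refine ⟨hxA, fun a ha => ?_⟩
  by_contra hcon
  push_neg at hcon
  -- active/nonactive dichotomy
  set act : ι → Prop := fun i => M ⊆ {x : E | ⟪x, n i⟫ = b i} with hact
  have hdichot : ∀ i, ¬ act i → ∃ m ∈ M, ⟪m, n i⟫ < b i := by
    intro i hi
    by_contra hcon2
    push_neg at hcon2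
    apply hi
    intro m hm
    have h1 : ⟪m, n i⟫ ≤ b i := by
      have := hMP hm; rw [hP] at this; exact this i
    exact le_antisymm h1 (hcon2 m hm)
  obtain ⟨x', hx'M, hx'⟩ := key (Finset.univ.filter fun i => ¬ act i)
    (fun i hi => hdichot i (Finset.mem_filter.mp hi).2)
  have hfx : f x' = f x := by
    have h1 : f x' ≤ f x := by
      rw [hM] at hx'M; exact hx'M.2 x (hMP hxM)
    have h2 : f x ≤ f x' := by
      rw [hM] at hxM; exact hxM.2 x' (hMP hx'M)
    linarith
  have hfa : f a < f x' := by rw [hfx]; exact hcon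
  set g : ι → ℝ := fun i => b i - ⟪x', n i⟫ with hg
  set hh : ι → ℝ := fun i => ⟪a, n i⟫ - ⟪x', n i⟫ with hhh
  have hcase : ∀ i, (⟪x', n i⟫ = b i ∧ ⟪a, n i⟫ = b i) ∨ 0 < g i := by
    intro i
    by_cases hi : act i
    · left
      constructor
      · exact hi hx'M
      · rw [hA] at ha
        exact Set.mem_iInter₂.mp ha i hi
    · right
      have := hx' i (Finset.mem_filter.mpr ⟨Finset.mem_univ i, hi⟩)
      simp only [hg]
      linarith
  set S : Finset ℝ := insert (1 : ℝ)
    (Finset.univ.image fun i => if 0 < hh i then g i / hh i else 1) with hS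
  have hSne : S.Nonempty := ⟨1, Finset.mem_insert_self _ _⟩
  set t : ℝ := S.min' hSne with ht
  have ht1 : t ≤ 1 := Finset.min'_le _ _ (Finset.mem_insert_self _ _)
  have htpos : 0 < t := by
    rw [ht, Finset.lt_min'_iff]
    intro y hy
    rcases Finset.mem_insert.mp hy with rfl | hy
    · norm_num
    · obtain ⟨i, _, rfl⟩ := Finset.mem_image.mp hy
      by_cases hi : 0 < hh i
      · simp only [if_pos hi]
        rcases hcase i with ⟨h1, h2⟩ | h1
        · exfalso
          simp only [hhh] at hi
          rw [h1, h2] at hi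
          linarith
        · positivity
      · simp only [if_neg hi]; norm_num
  have htb : ∀ i, t * hh i ≤ g i := by
    intro i
    by_cases hi : 0 < hh i
    · have hmem : g i / hh i ∈ S := by
        refine Finset.mem_insert_of_mem (Finset.mem_image.mpr ⟨i, Finset.mem_univ i, ?_⟩)
        rw [if_pos hi]
      have := Finset.min'_le _ _ hmem
      rw [← ht] at this
      calc t * hh i ≤ (g i / hh i) * hh i := mul_le_mul_of_nonneg_right this hi.le
        _ = g i := by field_simp
    · push_neg at hi
      have h1 : t * hh i ≤ 0 := mul_nonpos_of_nonneg_of_nonpos htpos.le hi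
      rcases hcase i with ⟨h2, h3⟩ | h2
      · simp only [hg]; linarith
      · linarith
  set z : E := (1 - t) • x' + t • a with hz
  have hzP : z ∈ P := by
    rw [hP]
    intro i
    have hzi : ⟪z, n i⟫ = (1 - t) * ⟪x', n i⟫ + t * ⟪a, n i⟫ := by
      rw [hz, inner_add_left, real_inner_smul_left, real_inner_smul_left]
    have := htb i
    simp only [hhh] at this
    rw [hzi]
    simp only [hg] at this
    nlinarith
  have hfz : f z ≤ (1 - t) * f x' + t * f a :=
    hf.2 (Set.mem_univ x') (Set.mem_univ a) (by linarith) htpos.le (by ring)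
  have hmin : f x' ≤ f z := by
    rw [hM] at hx'M; exact hx'M.2 z hzP
  nlinarith
end

section
/- (Necessary Criterion 2.) Let P be a polyhedron in E with defining data (ι, n, b), let f : E → ℝ be convex (ConvexOn ℝ Set.univ f), and assume argmin_P f is nonempty. Let A be the min space of f on P, i.e., A = ⋂{∂H i | argmin_P f ⊆ ∂H i} (equal to E if no hyperplane ∂H i contains argmin_P f), and let P_A = {x ∈ E | ∀ i, A ⊆ ∂H i → ⟪x, n i⟫ ≤ b i} be the P-cone of A. Then argmin_A f = argmin_{P_A} f. -/
open RealInnerProductSpace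

theorem necessary_criterion_two
    {E : Type*} [NormedAddCommGroup E] [InnerProductSpace ℝ E] [FiniteDimensional ℝ E]
    {ι : Type*} [Fintype ι] (n : ι → E) (b : ι → ℝ)
    (f : E → ℝ) (hf : ConvexOn ℝ Set.univ f)
    (P : Set E) (hP : P = {x : E | ∀ i, ⟪x, n i⟫ ≤ b i})
    (M : Set E) (hM : M = {x ∈ P | ∀ y ∈ P, f x ≤ f y}) (hMne : M.Nonempty)
    (A : Set E)
    (hA : A = ⋂ i ∈ {j : ι | M ⊆ {x : E | ⟪x, n j⟫ = b j}}, {x : E | ⟪x, n i⟫ = b i})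
    (PA : Set E)
    (hPA : PA = {x : E | ∀ i, A ⊆ {w : E | ⟪w, n i⟫ = b i} → ⟪x, n i⟫ ≤ b i}) :
    {x ∈ A | ∀ y ∈ A, f x ≤ f y} = {x ∈ PA | ∀ y ∈ PA, f x ≤ f y} := by
  classical
  obtain ⟨m, hm⟩ := hMne
  have hmP : m ∈ P := by rw [hM] at hm; exact hm.1
  -- membership in P unfolded
  have hPmem : ∀ x, x ∈ P ↔ ∀ i, ⟪x, n i⟫ ≤ b i := by intro x; rw [hP]; rfl
  have hMmem : ∀ x, x ∈ M ↔ x ∈ P ∧ ∀ y ∈ P, f x ≤ f y := by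
    intro x; rw [hM]; exact Iff.rfl
  -- P is convex
  have hPconv : Convex ℝ P := by
    intro x hx y hy a c ha hc hac
    rw [hPmem] at hx hy ⊢
    intro i
    have : ⟪a • x + c • y, n i⟫ = a * ⟪x, n i⟫ + c * ⟪y, n i⟫ := by
      rw [inner_add_left, real_inner_smul_left, real_inner_smul_left]
    rw [this]
    calc a * ⟪x, n i⟫ + c * ⟪y, n i⟫ ≤ a * b i + c * b i :=
          add_le_add (mul_le_mul_of_nonneg_left (hx i) ha)
            (mul_le_mul_of_nonneg_left (hy i) hc)
      _ = b i := by rw [← add_mul, hac, one_mul]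
  -- M is convex
  have hMconv : Convex ℝ M := by
    intro x hx y hy a c ha hc hac
    rw [hMmem] at hx hy ⊢
    refine ⟨hPconv hx.1 hy.1 ha hc hac, fun z hz => ?_⟩
    calc f (a • x + c • y) ≤ a * f x + c * f y :=
          hf.2 (Set.mem_univ x) (Set.mem_univ y) ha hc hac
      _ ≤ a * f z + c * f z :=
          add_le_add (mul_le_mul_of_nonneg_left (hx.2 z hz) ha)
            (mul_le_mul_of_nonneg_left (hy.2 z hz) hc)
      _ = f z := by rw [← add_mul, hac, one_mul]
  -- index set of active hyperplanes
  set J : Set ι := {j : ι | M ⊆ {x : E | ⟪x, n j⟫ = b j}} with hJ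
  -- witness points with strict inequality for inactive constraints
  have hwit : ∀ i : ι, i ∉ J → ∃ z ∈ M, ⟪z, n i⟫ < b i := by
    intro i hi
    obtain ⟨z, hzM, hz⟩ := Set.not_subset.mp hi
    refine ⟨z, hzM, lt_of_le_of_ne ?_ hz⟩
    have := ((hMmem z).mp hzM).1
    exact (hPmem z).mp this i
  set g : ι → E := fun i => if h : i ∈ J then m else (hwit i h).choose with hg
  have hgM : ∀ i, g i ∈ M := by
    intro i
    by_cases h : i ∈ J
    · simp [hg, h, hm]
    · simp only [hg, dif_neg h]; exact (hwit i h).choose_spec.1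
  have hgstrict : ∀ i, i ∉ J → ⟪g i, n i⟫ < b i := by
    intro i h
    simp only [hg, dif_neg h]; exact (hwit i h).choose_spec.2
  -- centroid point x₀ ∈ M with strict inequalities for all inactive constraints
  set G : Option ι → E := fun j => Option.elim j m g with hG
  have hGM : ∀ j, G j ∈ M := by rintro (_ | i) <;> simp [hG, hm, hgM]
  set N : ℝ := (Fintype.card (Option ι) : ℝ) with hN
  have hNpos : 0 < N := by
    have h : 0 < Fintype.card (Option ι) := Fintype.card_pos
    rw [hN]; exact_mod_cast h
  set x₀ : E := ∑ j : Option ι, N⁻¹ • G j with hx₀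
  have hwsum : ∑ _j : Option ι, N⁻¹ = 1 := by
    rw [Finset.sum_const, Finset.card_univ, nsmul_eq_mul, ← hN,
      mul_inv_cancel₀ hNpos.ne']
  have hx₀M : x₀ ∈ M := by
    rw [hx₀]
    exact hMconv.sum_mem (fun j _ => by positivity) (by simpa using hwsum)
      (fun j _ => hGM j)
  have hx₀P : x₀ ∈ P := ((hMmem x₀).mp hx₀M).1
  have hx₀min : ∀ y ∈ P, f x₀ ≤ f y := ((hMmem x₀).mp hx₀M).2
  have hMeq : ∀ i ∈ J, ∀ z ∈ M, ⟪z, n i⟫ = b i := fun i hi z hz => hi hz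
  have hx₀eq : ∀ i ∈ J, ⟪x₀, n i⟫ = b i := fun i hi => hMeq i hi x₀ hx₀M
  have hx₀strict : ∀ i, i ∉ J → ⟪x₀, n i⟫ < b i := by
    intro i hi
    have hinner : ⟪x₀, n i⟫ = ∑ j : Option ι, N⁻¹ * ⟪G j, n i⟫ := by
      rw [hx₀, sum_inner]
      exact Finset.sum_congr rfl fun j _ => real_inner_smul_left _ _ _
    have hb : b i = ∑ _j : Option ι, N⁻¹ * b i := by
      rw [← Finset.sum_mul, hwsum, one_mul]
    rw [hinner, hb]
    refine Finset.sum_lt_sum (fun j _ => ?_) ⟨some i, Finset.mem_univ _, ?_⟩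
    · have : ⟪G j, n i⟫ ≤ b i := (hPmem _).mp ((hMmem _).mp (hGM j)).1 i
      exact mul_le_mul_of_nonneg_left this (by positivity)
    · have : ⟪G (some i), n i⟫ < b i := hgstrict i hi
      exact mul_lt_mul_of_pos_left this (by positivity)
  -- the big cone defined by active constraints
  set Q : Set E := {x : E | ∀ i ∈ J, ⟪x, n i⟫ ≤ b i} with hQ
  have hPQ : P ⊆ Q := fun x hx i _ => (hPmem x).mp hx i
  have hPAQ : PA ⊆ Q := by
    intro x hx i hi
    rw [hPA] at hx
    refine hx i ?_
    rw [hA]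
    exact fun z hz => Set.mem_iInter₂.mp hz i hi
  have hAQ : A ⊆ PA := by
    intro x hx
    rw [hPA]
    intro i hi
    exact le_of_eq (hi hx)
  have hPPA : P ⊆ PA := by
    intro x hx
    rw [hPA]
    intro i _
    exact (hPmem x).mp hx i
  have hx₀A : x₀ ∈ A := by
    rw [hA]
    exact Set.mem_iInter₂.mpr fun i hi => hx₀eq i hi
  -- key construction: moving slightly from x₀ towards any x ∈ Q stays in P
  have key : ∀ x ∈ Q, ∃ t : ℝ, 0 < t ∧ t ≤ 1 ∧
      ((1 - t) • x₀ + t • x) ∈ P ∧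
      (∀ i ∈ J, ⟪(1 - t) • x₀ + t • x, n i⟫ = b i + t * (⟪x, n i⟫ - b i)) ∧
      f ((1 - t) • x₀ + t • x) ≤ (1 - t) * f x₀ + t * f x := by
    intro x hx
    set d : ι → ℝ := fun i => ⟪x - x₀, n i⟫ with hd
    set φ : Option ι → ℝ := fun j =>
      Option.elim j 1 (fun i => if i ∈ J then 1 else (b i - ⟪x₀, n i⟫) / (|d i| + 1)) with hφ
    have hφpos : ∀ j, 0 < φ j := by
      rintro (_ | i)
      · exact one_pos
      · by_cases h : i ∈ J
        · simp [hφ, h]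
        · simp only [hφ, Option.elim, if_neg h]
          have h1 : 0 < b i - ⟪x₀, n i⟫ := sub_pos.mpr (hx₀strict i h)
          have h2 : 0 < |d i| + 1 := by positivity
          exact div_pos h1 h2
    set t : ℝ := Finset.univ.inf' (Finset.univ_nonempty) φ with ht
    have htpos : 0 < t := by
      rw [ht, Finset.lt_inf'_iff]
      exact fun j _ => hφpos j
    have htle : ∀ j, t ≤ φ j := fun j => Finset.inf'_le φ (Finset.mem_univ j)
    have ht1 : t ≤ 1 := by simpa [hφ] using htle none
    have hval : ∀ i, ⟪(1 - t) • x₀ + t • x, n i⟫ = ⟪x₀, n i⟫ + t * d i := by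
      intro i
      simp only [hd, inner_sub_left]
      rw [inner_add_left, real_inner_smul_left, real_inner_smul_left]
      ring
    refine ⟨t, htpos, ht1, ?_, ?_, ?_⟩
    · rw [hPmem]
      intro i
      rw [hval i]
      by_cases h : i ∈ J
      · rw [hx₀eq i h]
        have hdle : d i ≤ 0 := by
          simp only [hd, inner_sub_left, hx₀eq i h]
          exact sub_nonpos.mpr (hx i h)
        nlinarith
      · have hti : t ≤ (b i - ⟪x₀, n i⟫) / (|d i| + 1) := by
          simpa [hφ, if_neg h] using htle (some i)
        have h2 : 0 < |d i| + 1 := by positivity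
        have h3 : t * (|d i| + 1) ≤ b i - ⟪x₀, n i⟫ := by
          rw [← le_div_iff₀ h2]; exact hti
        have h4 : t * d i ≤ t * (|d i| + 1) :=
          mul_le_mul_of_nonneg_left (by cases abs_cases (d i) <;> linarith) htpos.le
        linarith
    · intro i hi
      rw [hval i]
      simp only [hd, inner_sub_left, hx₀eq i hi]
    · exact hf.2 (Set.mem_univ x₀) (Set.mem_univ x) (by linarith) htpos.le (by ring)
  -- f x₀ is the minimum over Q
  have hminQ : ∀ x ∈ Q, f x₀ ≤ f x := by
    intro x hx
    by_contra hlt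
    push_neg at hlt
    obtain ⟨t, htpos, ht1, hmemP, _, hconv⟩ := key x hx
    have h1 : f ((1 - t) • x₀ + t • x) < f x₀ := by nlinarith
    exact absurd (hx₀min _ hmemP) (not_le.mpr h1)
  -- any minimizer over Q lies in A
  have hminA : ∀ x ∈ Q, f x ≤ f x₀ → x ∈ A := by
    intro x hx hle
    obtain ⟨t, htpos, ht1, hmemP, heq, hconv⟩ := key x hx
    have hfle : f ((1 - t) • x₀ + t • x) ≤ f x₀ := by nlinarith
    have hmemM : ((1 - t) • x₀ + t • x) ∈ M := by
      rw [hMmem]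
      exact ⟨hmemP, fun y hy => le_trans hfle (hx₀min y hy)⟩
    rw [hA]
    refine Set.mem_iInter₂.mpr fun i hi => ?_
    have h1 : ⟪(1 - t) • x₀ + t • x, n i⟫ = b i := hMeq i hi _ hmemM
    have h2 := heq i hi
    have h3 : t * (⟪x, n i⟫ - b i) = 0 := by linarith [h1, h2]
    have h4 : ⟪x, n i⟫ - b i = 0 := by
      rcases mul_eq_zero.mp h3 with h | h
      · exact absurd h htpos.ne'
      · exact h
    exact sub_eq_zero.mp h4
  -- conclusion
  ext x
  simp only [Set.mem_setOf_eq]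
  constructor
  · rintro ⟨hxA, hxmin⟩
    refine ⟨hAQ hxA, fun y hy => ?_⟩
    exact le_trans (hxmin x₀ hx₀A) (hminQ y (hPAQ hy))
  · rintro ⟨hxPA, hxmin⟩
    have hxQ : x ∈ Q := hPAQ hxPA
    have hle : f x ≤ f x₀ := hxmin x₀ (hPPA hx₀P)
    have hxA : x ∈ A := hminA x hxQ hle
    exact ⟨hxA, fun y hy => hxmin y (hAQ hy)⟩
end

section
/- Let P be a polyhedron in E with defining data (ι, n, b), let f : E → ℝ be convex (ConvexOn ℝ Set.univ f), and let A be an affine space of P with argmin_{P_A} f nonempty. Suppose A is a candidate for f on P: no affine space B of P with B ⊋ A equals the min space ⋂{∂H i | A ⊆ ∂H i and argmin_{P_A} f ⊆ ∂H i} of f on P_A. If there exists x ∈ argmin_A f with x ∈ P, then x ∈ argmin_P f. -/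
open RealInnerProductSpace

theorem candidate_sufficient_criterion
    {E : Type*} [NormedAddCommGroup E] [InnerProductSpace ℝ E] [FiniteDimensional ℝ E]
    {ι : Type*} [Fintype ι] (n : ι → E) (b : ι → ℝ)
    (f : E → ℝ) (hf : ConvexOn ℝ Set.univ f)
    (P : Set E) (hP : P = {x : E | ∀ i, ⟪x, n i⟫ ≤ b i})
    (A : Set E)
    (hAaff : ∃ s : Set ι, A = ⋂ i ∈ s, {x : E | ⟪x, n i⟫ = b i}) (hAne : A.Nonempty)
    (PA : Set E)
    (hPA : PA = {x : E | ∀ i, A ⊆ {w : E | ⟪w, n i⟫ = b i} → ⟪x, n i⟫ ≤ b i})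
    (MA : Set E) (hMA : MA = {x ∈ PA | ∀ y ∈ PA, f x ≤ f y}) (hMAne : MA.Nonempty)
    (hcand : ∀ B : Set E, (∃ s : Set ι, B = ⋂ i ∈ s, {x : E | ⟪x, n i⟫ = b i}) →
      B.Nonempty → A ⊂ B →
      B ≠ ⋂ i ∈ {j : ι | A ⊆ {x : E | ⟪x, n j⟫ = b j} ∧
        MA ⊆ {x : E | ⟪x, n j⟫ = b j}}, {x : E | ⟪x, n i⟫ = b i})
    (x : E) (hx : x ∈ {z ∈ A | ∀ y ∈ A, f z ≤ f y}) (hxP : x ∈ P) :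
    x ∈ {z ∈ P | ∀ y ∈ P, f z ≤ f y} := by
  obtain ⟨m, hm⟩ := hMAne
  set S : Set ι := {j : ι | A ⊆ {x : E | ⟪x, n j⟫ = b j} ∧
    MA ⊆ {x : E | ⟪x, n j⟫ = b j}} with hS
  set B : Set E := ⋂ i ∈ S, {x : E | ⟪x, n i⟫ = b i} with hB
  have hmB : m ∈ B := by
    simp only [hB, Set.mem_iInter]
    exact fun i hi => hi.2 hm
  have hAB : A ⊆ B := by
    intro a ha
    simp only [hB, Set.mem_iInter]
    exact fun i hi => hi.1 ha
  have hABeq : A = B := by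
    by_contra h
    exact hcand B ⟨S, rfl⟩ ⟨m, hmB⟩ (HasSubset.Subset.ssubset_of_ne hAB h) rfl
  have hmA : m ∈ A := hABeq ▸ hmB
  obtain ⟨hxA, hxmin⟩ := hx
  refine ⟨hxP, fun y hy => ?_⟩
  have hPsub : P ⊆ PA := by
    rw [hP, hPA]; exact fun z hz i _ => hz i
  have hmmin := hMA ▸ hm
  calc f x ≤ f m := hxmin m hmA
    _ ≤ f y := hmmin.2 y (hPsub hy)
end

section
/- Let P be a polyhedron in E with defining data (ι, n, b), let f : E → ℝ be convex (ConvexOn ℝ Set.univ f), and let A and B be affine spaces of P such that B is an immediate superspace of A, i.e., B ⊋ A and A = ∂H i₀ ∩ B for some i₀ ∈ ι. If argmin_{P_A} f is nonempty and argmin_{P_A} f ⊆ B \ A, then B is the min space of f on P_A; that is, B = ⋂{∂H i | A ⊆ ∂H i and argmin_{P_A} f ⊆ ∂H i}. -/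
open RealInnerProductSpace

theorem immediate_superspace_min_space
    {E : Type*} [NormedAddCommGroup E] [InnerProductSpace ℝ E]
    {ι : Type*} [Fintype ι] (n : ι → E) (b : ι → ℝ)
    (f : E → ℝ) (hf : ConvexOn ℝ Set.univ f)
    (P : Set E) (hP : P = {x : E | ∀ i, ⟪x, n i⟫ ≤ b i})
    (A B : Set E)
    (hAaff : ∃ s : Set ι, A = ⋂ i ∈ s, {x : E | ⟪x, n i⟫ = b i}) (hAne : A.Nonempty)
    (hBaff : ∃ s : Set ι, B = ⋂ i ∈ s, {x : E | ⟪x, n i⟫ = b i}) (hBne : B.Nonempty)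
    (hAB : A ⊂ B) (himm : ∃ i₀ : ι, A = {x : E | ⟪x, n i₀⟫ = b i₀} ∩ B)
    (PA : Set E)
    (hPA : PA = {x : E | ∀ i, A ⊆ {w : E | ⟪w, n i⟫ = b i} → ⟪x, n i⟫ ≤ b i})
    (MA : Set E) (hMA : MA = {x ∈ PA | ∀ y ∈ PA, f x ≤ f y}) (hMAne : MA.Nonempty)
    (hMAB : MA ⊆ B \ A) :
    B = ⋂ i ∈ {j : ι | A ⊆ {x : E | ⟪x, n j⟫ = b j} ∧
      MA ⊆ {x : E | ⟪x, n j⟫ = b j}}, {x : E | ⟪x, n i⟫ = b i} := by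
  obtain ⟨sB, hsB⟩ := hBaff
  obtain ⟨i₀, hi₀⟩ := himm
  obtain ⟨m, hm⟩ := hMAne
  obtain ⟨hmB, hmA⟩ := hMAB hm
  obtain ⟨a₀, ha₀⟩ := hAne
  have hAsubB : A ⊆ B := hAB.1
  have ha₀B : a₀ ∈ B := hAsubB ha₀
  have ha₀H : ⟪a₀, n i₀⟫ = b i₀ := by
    have := hi₀ ▸ ha₀; exact this.1
  have hBmem : ∀ x : E, x ∈ B ↔ ∀ i ∈ sB, ⟪x, n i⟫ = b i := by
    intro x; rw [hsB]; simp
  have hc : ⟪m, n i₀⟫ - b i₀ ≠ 0 := by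
    intro h
    apply hmA
    rw [hi₀]
    exact ⟨by simpa using sub_eq_zero.mp h, hmB⟩
  apply Set.Subset.antisymm
  · intro y hy
    simp only [Set.mem_iInter, Set.mem_setOf_eq]
    rintro j ⟨hjA, hjM⟩
    set c : ℝ := ⟪m, n i₀⟫ - b i₀ with hcdef
    set lam : ℝ := (⟪y, n i₀⟫ - b i₀) / c with hlam
    set z : E := y + lam • a₀ - lam • m with hz
    have hzinner : ∀ i : ι, ⟪z, n i⟫ = ⟪y, n i⟫ + lam * ⟪a₀, n i⟫ - lam * ⟪m, n i⟫ := by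
      intro i
      rw [hz, inner_sub_left, inner_add_left, real_inner_smul_left, real_inner_smul_left]
    have hzB : z ∈ B := by
      rw [hBmem]
      intro i hi
      have h1 := (hBmem y).mp hy i hi
      have h2 := (hBmem a₀).mp ha₀B i hi
      have h3 := (hBmem m).mp hmB i hi
      rw [hzinner, h1, h2, h3]; ring
    have hzH : ⟪z, n i₀⟫ = b i₀ := by
      have : lam * c = ⟪y, n i₀⟫ - b i₀ := div_mul_cancel₀ _ hc
      rw [hzinner, ha₀H]
      rw [hcdef] at this
      linarith
    have hzA : z ∈ A := by rw [hi₀]; exact ⟨hzH, hzB⟩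
    have h1 : ⟪z, n j⟫ = b j := hjA hzA
    have h2 : ⟪a₀, n j⟫ = b j := hjA ha₀
    have h3 : ⟪m, n j⟫ = b j := hjM hm
    have := hzinner j
    rw [h1, h2, h3] at this
    linarith
  · intro x hx
    rw [hBmem]
    intro i hi
    have hBsub : B ⊆ {w : E | ⟪w, n i⟫ = b i} := by
      rw [hsB]; exact Set.biInter_subset_of_mem hi
    have : i ∈ {j : ι | A ⊆ {x : E | ⟪x, n j⟫ = b j} ∧
        MA ⊆ {x : E | ⟪x, n j⟫ = b j}} :=
      ⟨hAsubB.trans hBsub, fun w hw => hBsub (hMAB hw).1⟩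
    simp only [Set.mem_iInter, Set.mem_setOf_eq] at hx
    exact hx i this
end
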